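/- Let A be a unital *-subalgebra of B(H) with CPTP factors R, J of the orthogonal conditional expectation onto A. For any D ∈ B(H), define G_D(ρ) = Dρ + ρD*. Then R ∘ G_D ∘ J = G_{Ď} with Ď = J*(D), i.e., R(D·J(ρ̌) + J(ρ̌)·D*) = Ď ρ̌ + ρ̌ Ď* for all ρ̌ in the reduced algebra. -/

import Mathlib

/-! STATEMENT 2: reduction of G_D(ρ) = Dρ + ρD*. With the CPTP factors R, J of the
orthogonal conditional expectation (Wedderburn data V, W), R ∘ G_D ∘ J = G_{Ď} with Ď = J*(D). -/

open Matrix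
open scoped Kronecker BigOperators

noncomputable section

abbrev Mat (n : ℕ) : Type := Matrix (Fin n) (Fin n) ℂ

/-- Partial trace over the second tensor factor. -/
def ptrG {a b : ℕ} (M : Matrix (Fin a × Fin b) (Fin a × Fin b) ℂ) :
    Matrix (Fin a) (Fin a) ℂ :=
  Matrix.of fun i j => ∑ g : Fin b, M (i, g) (j, g)

variable {K n m : ℕ} {dF dG : Fin K → ℕ}

/-- The reduction map `R : B(H) → Ǎ`, `R(X) = ⊕ₖ tr_{G,k}(Vₖ* X Vₖ)`. -/
def Rmap (V : ∀ k : Fin K, Matrix (Fin n) (Fin (dF k) × Fin (dG k)) ℂ)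
    (W : ∀ k : Fin K, Matrix (Fin m) (Fin (dF k)) ℂ) (X : Mat n) : Mat m :=
  ∑ k : Fin K, W k * ptrG ((V k)ᴴ * X * V k) * (W k)ᴴ

/-- The injection map `J : Ǎ → B(H)`, `J(ρ̌) = ⊕ₖ ρ̌ₖ ⊗ 1_{G,k}/dim H_{G,k}`. -/
def Jmap (V : ∀ k : Fin K, Matrix (Fin n) (Fin (dF k) × Fin (dG k)) ℂ)
    (W : ∀ k : Fin K, Matrix (Fin m) (Fin (dF k)) ℂ) (ρ : Mat m) : Mat n :=
  ∑ k : Fin K, V k *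
    (((W k)ᴴ * ρ * W k) ⊗ₖ (((dG k : ℂ))⁻¹ • (1 : Matrix (Fin (dG k)) (Fin (dG k)) ℂ))) *
    (V k)ᴴ

/-- The Hilbert–Schmidt adjoint of `J`, `J*(X) = ⊕ₖ tr_{G,k}(Vₖ* X Vₖ)/dim H_{G,k}`. -/
def Jstar (V : ∀ k : Fin K, Matrix (Fin n) (Fin (dF k) × Fin (dG k)) ℂ)
    (W : ∀ k : Fin K, Matrix (Fin m) (Fin (dF k)) ℂ) (X : Mat n) : Mat m :=
  ∑ k : Fin K, ((dG k : ℂ))⁻¹ • (W k * ptrG ((V k)ᴴ * X * V k) * (W k)ᴴ)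

/-- Membership in the reduced algebra `Ǎ = ⊕ₖ B(H_{F,k})`: block-diagonal matrices. -/
def IsBlockDiag (W : ∀ k : Fin K, Matrix (Fin m) (Fin (dF k)) ℂ) (ρ : Mat m) : Prop :=
  ρ = ∑ k : Fin K, (W k * (W k)ᴴ) * ρ * (W k * (W k)ᴴ)

/-! `R`, `J`, `J*` and block-diagonal `ρ̌` are all of the form `∑ₖ Aₖ Xₖ Aₖᴴ` for a family of
isometries `Aₖ` with orthogonal ranges (`Vₖ` or `Wₖ`), and such block sums multiply blockwise.
Compressing `D J(ρ̌) + J(ρ̌) D*` by `Vₖ` gives `Mₖ (σₖ ⊗ 1/d) + (σₖ ⊗ 1/d) Mₖ*` with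
`Mₖ = Vₖ* D Vₖ` and `σₖ = Wₖ* ρ̌ Wₖ`, whose partial trace is `Ďₖ σₖ + σₖ Ďₖ*` with
`Ďₖ = tr_G(Mₖ)/d`; reassembling these blocks with the `Wₖ` gives `Ď ρ̌ + ρ̌ Ď*`. -/

def blockSum {R N ι : Type*} [Semiring R] [StarRing R] [Fintype N] [Fintype ι]
    {κ : ι → Type*} [∀ k, Fintype (κ k)]
    (A : ∀ k, Matrix N (κ k) R) (X : ∀ k, Matrix (κ k) (κ k) R) : Matrix N N R :=
  ∑ k, A k * X k * (A k)ᴴ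

section blockSum

variable {R N ι : Type*} [Semiring R] [StarRing R] [Fintype N] [Fintype ι]
  {κ : ι → Type*} [∀ k, Fintype (κ k)] {A : ∀ k, Matrix N (κ k) R}

lemma blockSum_add (X Y : ∀ k, Matrix (κ k) (κ k) R) :
    blockSum A X + blockSum A Y = blockSum A (fun k => X k + Y k) := by
  simp only [blockSum, ← Finset.sum_add_distrib, Matrix.mul_add, Matrix.add_mul]

lemma conjTranspose_blockSum (X : ∀ k, Matrix (κ k) (κ k) R) :
    (blockSum A X)ᴴ = blockSum A (fun k => (X k)ᴴ) := by
  simp only [blockSum, Matrix.conjTranspose_sum, Matrix.conjTranspose_mul,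
    Matrix.conjTranspose_conjTranspose, Matrix.mul_assoc]

variable [∀ k, DecidableEq (κ k)]

lemma blockSum_mul_isometry (hortho : ∀ k, (A k)ᴴ * A k = 1)
    (hdisj : ∀ j k, j ≠ k → (A j)ᴴ * A k = 0) (X : ∀ k, Matrix (κ k) (κ k) R) (k : ι) :
    blockSum A X * A k = A k * X k := by
  rw [blockSum, Matrix.sum_mul, Finset.sum_eq_single k]
  · rw [Matrix.mul_assoc, hortho, Matrix.mul_one]
  · intro j _ hj
    rw [Matrix.mul_assoc, hdisj j k hj, Matrix.mul_zero]
  · simp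

lemma conjTranspose_isometry_mul_blockSum (hortho : ∀ k, (A k)ᴴ * A k = 1)
    (hdisj : ∀ j k, j ≠ k → (A j)ᴴ * A k = 0) (X : ∀ k, Matrix (κ k) (κ k) R) (k : ι) :
    (A k)ᴴ * blockSum A X = X k * (A k)ᴴ := by
  rw [blockSum, Matrix.mul_sum, Finset.sum_eq_single k]
  · rw [← Matrix.mul_assoc, ← Matrix.mul_assoc, hortho, Matrix.one_mul]
  · intro j _ hj
    rw [← Matrix.mul_assoc, ← Matrix.mul_assoc, hdisj k j (Ne.symm hj), Matrix.zero_mul,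
      Matrix.zero_mul]
  · simp

lemma blockSum_mul_blockSum (hortho : ∀ k, (A k)ᴴ * A k = 1)
    (hdisj : ∀ j k, j ≠ k → (A j)ᴴ * A k = 0) (X Y : ∀ k, Matrix (κ k) (κ k) R) :
    blockSum A X * blockSum A Y = blockSum A (fun k => X k * Y k) := by
  change blockSum A X * ∑ k, A k * Y k * (A k)ᴴ = _
  rw [Matrix.mul_sum]
  refine Finset.sum_congr rfl fun k _ => ?_
  rw [← Matrix.mul_assoc, ← Matrix.mul_assoc, blockSum_mul_isometry hortho hdisj,
    Matrix.mul_assoc (A k)]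

lemma compress_mul_blockSum_add (hortho : ∀ k, (A k)ᴴ * A k = 1)
    (hdisj : ∀ j k, j ≠ k → (A j)ᴴ * A k = 0) (D : Matrix N N R)
    (X : ∀ k, Matrix (κ k) (κ k) R) (k : ι) :
    (A k)ᴴ * (D * blockSum A X + blockSum A X * Dᴴ) * A k =
      ((A k)ᴴ * D * A k) * X k + X k * ((A k)ᴴ * D * A k)ᴴ := by
  have hleft : (A k)ᴴ * (D * blockSum A X) * A k = (A k)ᴴ * D * A k * X k := by
    rw [Matrix.mul_assoc, Matrix.mul_assoc D, blockSum_mul_isometry hortho hdisj]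
    simp only [Matrix.mul_assoc]
  have hright : (A k)ᴴ * (blockSum A X * Dᴴ) * A k = X k * ((A k)ᴴ * D * A k)ᴴ := by
    rw [← Matrix.mul_assoc, conjTranspose_isometry_mul_blockSum hortho hdisj]
    simp only [Matrix.conjTranspose_mul, Matrix.conjTranspose_conjTranspose, Matrix.mul_assoc]
  rw [Matrix.mul_add, Matrix.add_mul, hleft, hright]

end blockSum

section ptrG

variable {a b : ℕ}

lemma ptrG_mul_kronecker_one (M : Matrix (Fin a × Fin b) (Fin a × Fin b) ℂ)
    (σ : Matrix (Fin a) (Fin a) ℂ) :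
    ptrG (M * (σ ⊗ₖ (1 : Matrix (Fin b) (Fin b) ℂ))) = ptrG M * σ := by
  ext i j
  simp only [ptrG, Matrix.of_apply, Matrix.mul_apply, Matrix.kroneckerMap_apply,
    Matrix.one_apply, Fintype.sum_prod_type, mul_ite, mul_one, mul_zero,
    Finset.sum_ite_eq', Finset.mem_univ, Finset.sum_mul]
  exact Finset.sum_comm

lemma ptrG_kronecker_one_mul (M : Matrix (Fin a × Fin b) (Fin a × Fin b) ℂ)
    (σ : Matrix (Fin a) (Fin a) ℂ) :
    ptrG ((σ ⊗ₖ (1 : Matrix (Fin b) (Fin b) ℂ)) * M) = σ * ptrG M := by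
  ext i j
  simp only [ptrG, Matrix.of_apply, Matrix.mul_apply, Matrix.kroneckerMap_apply,
    Matrix.one_apply, Fintype.sum_prod_type, mul_ite, mul_one, mul_zero, ite_mul, zero_mul,
    Finset.sum_ite_eq, Finset.mem_univ, if_true, Finset.mul_sum]
  exact Finset.sum_comm

lemma ptrG_add (M N : Matrix (Fin a × Fin b) (Fin a × Fin b) ℂ) :
    ptrG (M + N) = ptrG M + ptrG N := by
  ext i j
  simp [ptrG, Finset.sum_add_distrib]

lemma ptrG_smul (c : ℂ) (M : Matrix (Fin a × Fin b) (Fin a × Fin b) ℂ) :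
    ptrG (c • M) = c • ptrG M := by
  ext i j
  simp [ptrG, Finset.mul_sum]

lemma conjTranspose_ptrG (M : Matrix (Fin a × Fin b) (Fin a × Fin b) ℂ) :
    (ptrG M)ᴴ = ptrG Mᴴ := by
  ext i j
  simp [ptrG, Matrix.conjTranspose_apply]

lemma ptrG_mul_kronecker_add (M : Matrix (Fin a × Fin b) (Fin a × Fin b) ℂ)
    (σ : Matrix (Fin a) (Fin a) ℂ) {c : ℂ} (hc : star c = c) :
    ptrG (M * (σ ⊗ₖ (c • (1 : Matrix (Fin b) (Fin b) ℂ))) +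
        (σ ⊗ₖ (c • (1 : Matrix (Fin b) (Fin b) ℂ))) * Mᴴ) =
      (c • ptrG M) * σ + σ * (c • ptrG M)ᴴ := by
  rw [Matrix.kronecker_smul, Matrix.mul_smul, Matrix.smul_mul, ptrG_add, ptrG_smul, ptrG_smul,
    ptrG_mul_kronecker_one, ptrG_kronecker_one_mul, Matrix.conjTranspose_smul, hc,
    conjTranspose_ptrG, Matrix.smul_mul, Matrix.mul_smul]

end ptrG

lemma Rmap_eq_blockSum (V : ∀ k : Fin K, Matrix (Fin n) (Fin (dF k) × Fin (dG k)) ℂ)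
    (W : ∀ k : Fin K, Matrix (Fin m) (Fin (dF k)) ℂ) (X : Mat n) :
    Rmap V W X = blockSum W (fun k => ptrG ((V k)ᴴ * X * V k)) := rfl

lemma Jmap_eq_blockSum (V : ∀ k : Fin K, Matrix (Fin n) (Fin (dF k) × Fin (dG k)) ℂ)
    (W : ∀ k : Fin K, Matrix (Fin m) (Fin (dF k)) ℂ) (ρ : Mat m) :
    Jmap V W ρ = blockSum V (fun k =>
      ((W k)ᴴ * ρ * W k) ⊗ₖ (((dG k : ℂ))⁻¹ • (1 : Matrix (Fin (dG k)) (Fin (dG k)) ℂ))) := rfl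

lemma Jstar_eq_blockSum (V : ∀ k : Fin K, Matrix (Fin n) (Fin (dF k) × Fin (dG k)) ℂ)
    (W : ∀ k : Fin K, Matrix (Fin m) (Fin (dF k)) ℂ) (X : Mat n) :
    Jstar V W X = blockSum W (fun k => ((dG k : ℂ))⁻¹ • ptrG ((V k)ᴴ * X * V k)) := by
  simp only [Jstar, blockSum, Matrix.mul_smul, Matrix.smul_mul]

lemma IsBlockDiag.eq_blockSum {W : ∀ k : Fin K, Matrix (Fin m) (Fin (dF k)) ℂ} {ρ : Mat m}
    (hρ : IsBlockDiag W ρ) : ρ = blockSum W (fun k => (W k)ᴴ * ρ * W k) := by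
  conv_lhs => rw [hρ]
  simp only [blockSum, Matrix.mul_assoc]

theorem reduced_GD_general
    (V : ∀ k : Fin K, Matrix (Fin n) (Fin (dF k) × Fin (dG k)) ℂ)
    (W : ∀ k : Fin K, Matrix (Fin m) (Fin (dF k)) ℂ)
    (hVortho : ∀ k, (V k)ᴴ * V k = 1)
    (hVdisj : ∀ j k, j ≠ k → (V j)ᴴ * V k = 0)
    (hWortho : ∀ k, (W k)ᴴ * W k = 1)
    (hWdisj : ∀ j k, j ≠ k → (W j)ᴴ * W k = 0)
    (D : Mat n) :
    ∀ ρ : Mat m, IsBlockDiag W ρ →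
      Rmap V W (D * Jmap V W ρ + Jmap V W ρ * Dᴴ) =
        Jstar V W D * ρ + ρ * (Jstar V W D)ᴴ := by
  intro ρ hρ
  set σ : ∀ k, Matrix (Fin (dF k)) (Fin (dF k)) ℂ := fun k => (W k)ᴴ * ρ * W k
  set Ď : ∀ k, Matrix (Fin (dF k)) (Fin (dF k)) ℂ :=
    fun k => ((dG k : ℂ))⁻¹ • ptrG ((V k)ᴴ * D * V k)
  have hreal : ∀ k, star ((dG k : ℂ))⁻¹ = ((dG k : ℂ))⁻¹ := fun k => by simp
  calc Rmap V W (D * Jmap V W ρ + Jmap V W ρ * Dᴴ)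
      = blockSum W (fun k => Ď k * σ k + σ k * (Ď k)ᴴ) := by
        simp only [Rmap_eq_blockSum, Jmap_eq_blockSum,
          compress_mul_blockSum_add hVortho hVdisj, ptrG_mul_kronecker_add _ _ (hreal _)]
        rfl
    _ = Jstar V W D * ρ + ρ * (Jstar V W D)ᴴ := by
        rw [Jstar_eq_blockSum, hρ.eq_blockSum, conjTranspose_blockSum,
          blockSum_mul_blockSum hWortho hWdisj, blockSum_mul_blockSum hWortho hWdisj,
          blockSum_add]

theorem reduced_GD
    (V : ∀ k : Fin K, Matrix (Fin n) (Fin (dF k) × Fin (dG k)) ℂ)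
    (W : ∀ k : Fin K, Matrix (Fin m) (Fin (dF k)) ℂ)
    (hVortho : ∀ k, (V k)ᴴ * V k = 1)
    (hVdisj : ∀ j k, j ≠ k → (V j)ᴴ * V k = 0)
    (hVcomplete : ∑ k : Fin K, V k * (V k)ᴴ = 1)
    (hWortho : ∀ k, (W k)ᴴ * W k = 1)
    (hWdisj : ∀ j k, j ≠ k → (W j)ᴴ * W k = 0)
    (hWcomplete : ∑ k : Fin K, W k * (W k)ᴴ = 1)
    (hdG : ∀ k, 0 < dG k)
    (D : Mat n) :
    ∀ ρ : Mat m, IsBlockDiag W ρ →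
      Rmap V W (D * Jmap V W ρ + Jmap V W ρ * Dᴴ) =
        Jstar V W D * ρ + ρ * (Jstar V W D)ᴴ :=
  reduced_GD_general V W hVortho hVdisj hWortho hWdisj D

end
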